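/- arXiv:2110.15585 — 4 statements merged into one kernel-verified Lean document; each statement's English description precedes it below -/
import Mathlib

section
/- Let k ≥ 2 be an integer, set m = 3k, and let a be a nonzero element of F_{2^m}. If the absolute trace T_{2^m}(a z) = 0 and the subtrace S_{2^m}(a z) = 0 for every z ∈ F_{2^k}, then a^{2^k - 1} lies in the subfield F_{2^k}. -/
open Finset Polynomial

private lemma key_block {M : Type*} [AddCommMonoid M] {k : ℕ} (hk : 0 < k) (c : ℕ)
    (hc : c % k = 0) (f : ℕ → M) :
    ∑ x ∈ Finset.range k, (if (c + x) % k = 0 then f (c + x) else 0) = f c := by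
  have h1 : ∀ x ∈ Finset.range k, (if (c + x) % k = 0 then f (c + x) else 0)
      = (if x = 0 then f (c + x) else 0) := by
    intro x hx
    have hx' : x < k := Finset.mem_range.mp hx
    have : (c + x) % k = x := by
      rw [Nat.add_mod, hc, Nat.mod_eq_of_lt hx', zero_add, Nat.mod_eq_of_lt hx']
    rw [this]
  rw [Finset.sum_congr rfl h1, Finset.sum_ite_eq' (Finset.range k) 0]
  simp [hk]

private lemma sumblock {M : Type*} [AddCommMonoid M] {k : ℕ} (hk : 0 < k) (f : ℕ → M) :
    ∑ i ∈ Finset.range (3*k), (if i % k = 0 then f i else 0) = f 0 + f k + f (2*k) := by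
  have h3 : 3*k = k + (k + k) := by ring
  rw [h3, Finset.sum_range_add, Finset.sum_range_add]
  have e0 := key_block hk 0 (by simp) f
  have e1 := key_block hk k (by simp) f
  have e2 := key_block hk (k + k) (by simp) f
  simp only [zero_add] at e0
  rw [e0, e1]
  rw [show (∑ x ∈ Finset.range k, (if (k + (k + x)) % k = 0 then f (k + (k + x)) else 0))
      = ∑ x ∈ Finset.range k, (if ((k + k) + x) % k = 0 then f ((k + k) + x) else 0) by
    refine Finset.sum_congr rfl fun x _ => ?_; rw [add_assoc], e2]
  rw [show 2 * k = k + k by ring, add_assoc]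

private lemma sumblock2 {M : Type*} [AddCommMonoid M] {k : ℕ} (hk : 0 < k) (f : ℕ → ℕ → M) :
    ∑ i ∈ Finset.range (3*k), ∑ j ∈ Finset.range (3*k),
      (if i % k = 0 ∧ (j % k = 0 ∧ i < j) then f i j else 0)
      = f 0 k + f 0 (2*k) + f k (2*k) := by
  have step1 : ∀ i ∈ Finset.range (3*k),
      (∑ j ∈ Finset.range (3*k), if i % k = 0 ∧ (j % k = 0 ∧ i < j) then f i j else 0)
      = (if i % k = 0 then
          (∑ j ∈ Finset.range (3*k), if j % k = 0 then (if i < j then f i j else 0) else 0)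
          else 0) := by
    intro i _
    by_cases hi : i % k = 0
    · simp only [hi, if_true, true_and]
      refine Finset.sum_congr rfl fun j _ => ?_
      by_cases h1 : j % k = 0 <;> by_cases h2 : i < j <;> simp [h1, h2]
    · simp [hi]
  rw [Finset.sum_congr rfl step1,
    sumblock hk (fun i => ∑ j ∈ Finset.range (3*k), if j % k = 0 then (if i < j then f i j else 0) else 0)]
  rw [sumblock hk fun j => (if 0 < j then f 0 j else 0),
    sumblock hk fun j => (if k < j then f k j else 0),
    sumblock hk fun j => (if 2*k < j then f (2*k) j else 0)]
  have c1 : 0 < 2*k := by omega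
  have c2 : k < 2*k := by omega
  simp [hk, c1, c2, Nat.lt_irrefl]


private lemma card_fixed {F : Type*} [Field F] [Fintype F] (k m : ℕ) [CharP F 2]
    (hk : 0 < k) (hkm : k ∣ m) (hm : m ≠ 0) (hcard : Fintype.card F = 2 ^ m) :
    ∃ s : Finset F, s.card = 2 ^ k ∧ ∀ z : F, z ∈ s ↔ z ^ (2^k) = z := by
  classical
  set g : F[X] := X ^ (2^k) - X with hg
  have hgne : g ≠ 0 := FiniteField.X_pow_card_pow_sub_X_ne_zero F hk.ne' one_lt_two
  have hsep : g.Separable := galois_poly_separable 2 (2^k) (dvd_pow_self 2 hk.ne')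
  -- dvd
  have hdvd1 : 2^k - 1 ∣ 2^m - 1 := by
    obtain ⟨c, rfl⟩ := hkm
    have := Nat.sub_dvd_pow_sub_pow (2^k) 1 c
    simpa [← pow_mul] using this
  obtain ⟨c, hc⟩ := hdvd1
  have hdvd : g ∣ (X ^ Fintype.card F - X : F[X]) := by
    have h1 : (X:F[X]) ^ (2^k - 1) - 1 ∣ (X:F[X]) ^ (2^m - 1) - 1 := by
      have := sub_dvd_pow_sub_pow ((X:F[X]) ^ (2^k - 1)) 1 c
      rwa [← pow_mul, ← hc, one_pow] at this
    have e1 : (X:F[X]) ^ (2^k) - X = X * ((X:F[X]) ^ (2^k - 1) - 1) := by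
      rw [mul_sub, mul_one, ← pow_succ']
      congr 2
      have : 0 < 2^k := pow_pos (by norm_num) k
      omega
    have e2 : (X:F[X]) ^ (Fintype.card F) - X = X * ((X:F[X]) ^ (2^m - 1) - 1) := by
      rw [mul_sub, mul_one, ← pow_succ', hcard]
      congr 2
      have : 0 < 2^m := pow_pos (by norm_num) m
      omega
    rw [hg, e1, e2]
    exact mul_dvd_mul_left _ h1
  have hbig : Splits (X ^ Fintype.card F - X : F[X]) := by
    rw [splits_iff_card_roots, FiniteField.roots_X_pow_card_sub_X,
      FiniteField.X_pow_card_sub_X_natDegree_eq F Fintype.one_lt_card]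
    simp
  have hbigne : (X ^ Fintype.card F - X : F[X]) ≠ 0 := by
    rw [hcard]; exact FiniteField.X_pow_card_pow_sub_X_ne_zero F hm one_lt_two
  have hsplits : Splits g := Splits.of_dvd hbig hbigne hdvd
  have hroots : Multiset.card g.roots = 2^k := by
    rw [splits_iff_card_roots.mp hsplits, hg,
      FiniteField.X_pow_card_pow_sub_X_natDegree_eq F hk.ne' one_lt_two]
  refine ⟨g.roots.toFinset, ?_, ?_⟩
  · rw [Multiset.toFinset_card_of_nodup (nodup_roots hsep), hroots]
  · intro z
    rw [Multiset.mem_toFinset, mem_roots hgne]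
    simp [hg, IsRoot, sub_eq_zero]

private lemma pow_pow_mod {F : Type*} [Monoid F] {z : F} {k : ℕ}
    (hz : z ^ (2^k) = z) (i : ℕ) : z ^ (2^i) = z ^ (2^(i % k)) := by
  have base : ∀ e, z ^ ((2^k)^e) = z := by
    intro e
    induction e with
    | zero => simp
    | succ e ih => rw [pow_succ, pow_mul, ih, hz]
  have h2 : (2:ℕ)^i = (2^k)^(i/k) * 2^(i%k) := by
    rw [← pow_mul, ← pow_add, Nat.div_add_mod]
  rw [h2, pow_mul, base]

private def Eexp (k i j : ℕ) : ℕ :=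
  if i % k + 1 = k ∧ j % k + 1 = k then 1 else 2^(i % k) + 2^(j % k)


/-- Absolute trace `T_{2^m}(a) = Σ_{0 ≤ i < m} a^(2^i)` (an element of `F_2 ⊆ F`). -/
def absTrace {F : Type*} [Field F] (m : ℕ) (a : F) : F :=
  ∑ i ∈ Finset.range m, a ^ (2 ^ i)

/-- Subtrace `S_{2^m}(a) = Σ_{0 ≤ i < j < m} a^(2^i + 2^j)` (an element of `F_2 ⊆ F`). -/
def subTrace {F : Type*} [Field F] (m : ℕ) (a : F) : F :=
  ∑ i ∈ Finset.range m, ∑ j ∈ Finset.Ico (i + 1) m, a ^ (2 ^ i + 2 ^ j)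

/-- For `k ≥ 2`, `m = 3k` and nonzero `a ∈ F_{2^m}`: if `T_{2^m}(a z) = 0` and
`S_{2^m}(a z) = 0` for every `z` in the subfield `F_{2^k} = {z : z^(2^k) = z}`,
then `a^(2^k - 1)` lies in that subfield. -/
theorem stmt5 {F : Type*} [Field F] [Fintype F] (k m : ℕ)
    (hk : 2 ≤ k) (hm : m = 3 * k) (hcard : Fintype.card F = 2 ^ m)
    (a : F) (ha : a ≠ 0)
    (h : ∀ z : F, z ^ (2 ^ k) = z → absTrace m (a * z) = 0 ∧ subTrace m (a * z) = 0) :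
    (a ^ (2 ^ k - 1)) ^ (2 ^ k) = a ^ (2 ^ k - 1) := by
    classical
  obtain ⟨n, rfl⟩ : ∃ n, k = n + 2 := ⟨k - 2, by omega⟩
  subst hm
  set k := n + 2 with hkdef
  -- char 2
  haveI hchar : CharP F 2 := by
    haveI := ringChar.charP F
    obtain ⟨nn, hp, hc⟩ := FiniteField.card F (ringChar F)
    have h2 : ringChar F = 2 := by
      have hdvd : ringChar F ∣ 2 ^ (3*k) := by
        rw [← hcard, hc]; exact dvd_pow_self _ (by positivity)
      have := (Nat.Prime.prime hp).dvd_of_dvd_pow hdvd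
      exact (Nat.prime_dvd_prime_iff_eq hp Nat.prime_two).mp this
    rwa [h2] at this
  -- the subfield as a finset
  obtain ⟨s, hscard, hsmem⟩ :=
    card_fixed k (3*k) (by omega) ⟨3, by ring⟩ (by omega) hcard
  -- linear polynomial
  set P : F[X] := ∑ i ∈ Finset.range (3*k), C (a ^ (2^i)) * X ^ (2 ^ (i % k)) with hPdef
  have hPeval : ∀ z ∈ s, P.eval z = 0 := by
    intro z hz
    have hzq := (hsmem z).mp hz
    have hT := (h z hzq).1
    rw [absTrace] at hT
    rw [hPdef]
    rw [eval_finset_sum]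
    rw [← hT]
    refine Finset.sum_congr rfl fun i _ => ?_
    rw [eval_mul, eval_C, eval_pow, eval_X, mul_pow]
    congr 1
    exact (pow_pow_mod hzq i).symm
  have hPdeg : P.natDegree < s.card := by
    have : P.natDegree ≤ 2^(n+1) := by
      refine Polynomial.natDegree_sum_le_of_forall_le _ _ fun i _ => ?_
      refine le_trans (natDegree_C_mul_le _ _) ?_
      rw [natDegree_X_pow]
      exact Nat.pow_le_pow_right (by norm_num) (by have := Nat.mod_lt i (show 0 < k by omega); omega)
    have h2 : (2:ℕ)^(n+1) < 2^k := by
      exact Nat.pow_lt_pow_right (by norm_num) (by omega)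
    omega
  have hP0 : P = 0 :=
    Polynomial.eq_zero_of_natDegree_lt_card_of_eval_eq_zero' P s hPeval hPdeg
  have e1 : a^(2^0) + a^(2^k) + a^(2^(2*k)) = 0 := by
    have hc : P.coeff 1 = 0 := by rw [hP0, coeff_zero]
    rw [hPdef, finset_sum_coeff] at hc
    rw [Finset.sum_congr rfl (fun i (hi : i ∈ Finset.range (3*k)) => ?_)] at hc
    · rw [sumblock (show 0 < k by omega) (fun i => a^(2^i))] at hc
      exact hc
    · show (C (a ^ (2^i)) * X ^ (2 ^ (i % k))).coeff 1 = if i % k = 0 then a^(2^i) else 0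
      rw [coeff_C_mul, coeff_X_pow]
      by_cases hik : i % k = 0
      · simp [hik]
      · have : 2 ≤ 2^(i % k) := by
          calc (2:ℕ) = 2^1 := rfl
          _ ≤ 2^(i % k) := Nat.pow_le_pow_right (by norm_num) (by omega)
        have : (1:ℕ) ≠ 2^(i % k) := by omega
        simp [hik, this]
  -- quadratic polynomial
  set Q : F[X] := ∑ i ∈ Finset.range (3*k), ∑ j ∈ Finset.range (3*k),
      (if i < j then C (a^(2^i + 2^j)) * X^(Eexp k i j) else 0) with hQdef
  have hQeval : ∀ z ∈ s, Q.eval z = 0 := by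
    intro z hz
    have hzq := (hsmem z).mp hz
    have hS := (h z hzq).2
    rw [subTrace] at hS
    rw [hQdef, eval_finset_sum, ← hS]
    refine Finset.sum_congr rfl fun i hi => ?_
    rw [eval_finset_sum]
    have hIco : Finset.Ico (i+1) (3*k) = (Finset.range (3*k)).filter (fun j => i < j) := by
      ext j
      simp only [Finset.mem_Ico, Finset.mem_filter, Finset.mem_range]
      omega
    rw [hIco, Finset.sum_filter]
    refine Finset.sum_congr rfl fun j hj => ?_
    by_cases hij : i < j
    · rw [if_pos hij, if_pos hij, eval_mul, eval_C, eval_pow, eval_X, mul_pow]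
      congr 1
      show z ^ (Eexp k i j) = z ^ (2^i + 2^j)
      rw [pow_add, pow_pow_mod hzq i, pow_pow_mod hzq j, Eexp]
      by_cases hb : i % k + 1 = k ∧ j % k + 1 = k
      · rw [if_pos hb, pow_one, show i % k = n+1 by omega, show j % k = n+1 by omega, ← pow_add,
          show 2^(n+1) + 2^(n+1) = 2^k by rw [hkdef]; ring, hzq]
      · rw [if_neg hb, pow_add]
    · rw [if_neg hij, if_neg hij, eval_zero]
  have hEle : ∀ i j : ℕ, Eexp k i j ≤ 2^(n+1) + 2^n := by
    intro i j
    have mono : ∀ s t : ℕ, s ≤ t → (2:ℕ)^s ≤ 2^t :=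
      fun s t hst => Nat.pow_le_pow_right (by norm_num) hst
    have hone : (1:ℕ) ≤ 2^n := Nat.one_le_two_pow
    rw [Eexp]
    by_cases hb : i % k + 1 = k ∧ j % k + 1 = k
    · rw [if_pos hb]; omega
    · rw [if_neg hb]
      have hi := Nat.mod_lt i (show 0 < k by omega)
      have hj := Nat.mod_lt j (show 0 < k by omega)
      by_cases hik : i % k + 1 = k
      · have hjk : ¬ (j % k + 1 = k) := fun hh => hb ⟨hik, hh⟩
        have b1 : (2:ℕ)^(i % k) ≤ 2^(n+1) := mono _ _ (by omega)
        have b2 : (2:ℕ)^(j % k) ≤ 2^n := mono _ _ (by omega)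
        omega
      · have b1 : (2:ℕ)^(i % k) ≤ 2^n := mono _ _ (by omega)
        have b2 : (2:ℕ)^(j % k) ≤ 2^(n+1) := mono _ _ (by omega)
        omega
  have hQdeg : Q.natDegree < s.card := by
    have hd : Q.natDegree ≤ 2^(n+1) + 2^n := by
      refine Polynomial.natDegree_sum_le_of_forall_le _ _ fun i _ => ?_
      refine Polynomial.natDegree_sum_le_of_forall_le _ _ fun j _ => ?_
      by_cases hij : i < j
      · rw [if_pos hij]
        refine le_trans (natDegree_C_mul_le _ _) ?_
        rw [natDegree_X_pow]
        exact hEle i j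
      · rw [if_neg hij]; simp
    have h2 : (2:ℕ)^(n+1) + 2^n < 2^k := by
      have ea : (2:ℕ)^(n+1) = 2*2^n := by ring
      have eb : (2:ℕ)^k = 4*2^n := by rw [hkdef]; ring
      have hone : (1:ℕ) ≤ 2^n := Nat.one_le_two_pow
      omega
    omega
  have hQ0 : Q = 0 :=
    Polynomial.eq_zero_of_natDegree_lt_card_of_eval_eq_zero' Q s hQeval hQdeg
  have e2 : a^(2^0+2^k) + a^(2^0+2^(2*k)) + a^(2^k+2^(2*k)) = 0 := by
    have hc : Q.coeff 2 = 0 := by rw [hQ0, coeff_zero]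
    rw [hQdef, finset_sum_coeff] at hc
    have tr : ∀ i ∈ Finset.range (3*k),
        (∑ j ∈ Finset.range (3*k), if i < j then C (a^(2^i+2^j)) * X^(Eexp k i j) else 0).coeff 2
        = ∑ j ∈ Finset.range (3*k),
            (if i % k = 0 ∧ (j % k = 0 ∧ i < j) then a^(2^i+2^j) else 0) := by
      intro i _
      rw [finset_sum_coeff]
      refine Finset.sum_congr rfl fun j _ => ?_
      by_cases hij : i < j
      · rw [if_pos hij, coeff_C_mul, coeff_X_pow]
        by_cases hcon : i % k = 0 ∧ j % k = 0
        · have hEij : Eexp k i j = 2 := by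
            rw [Eexp, if_neg (by omega), hcon.1, hcon.2]
            norm_num
          simp [hEij, hcon, hij]
        · have hEij : Eexp k i j ≠ 2 := by
            rw [Eexp]
            by_cases hb : i % k + 1 = k ∧ j % k + 1 = k
            · rw [if_pos hb]; omega
            · rw [if_neg hb]
              intro hcontra
              have one_le_i : (1:ℕ) ≤ 2^(i % k) := Nat.one_le_two_pow
              have one_le_j : (1:ℕ) ≤ 2^(j % k) := Nat.one_le_two_pow
              have two_le : ∀ t:ℕ, t ≠ 0 → (2:ℕ) ≤ 2^t := by
                intro t ht
                calc (2:ℕ) = 2^1 := rfl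
                _ ≤ 2^t := Nat.pow_le_pow_right (by norm_num) (by omega)
              refine hcon ?_
              constructor
              · by_contra hi0
                have := two_le _ hi0
                omega
              · by_contra hj0
                have := two_le _ hj0
                omega
          have : (2:ℕ) ≠ Eexp k i j := fun hh => hEij hh.symm
          simp [hij, this, hcon]
      · simp [hij]
    rw [Finset.sum_congr rfl tr,
      sumblock2 (show 0 < k by omega) (fun i j => a^(2^i+2^j))] at hc
    exact hc
  -- final algebra
  have hq1 : (0:ℕ) < 2^k := pow_pos (by norm_num) _
  set u := a ^ (2^k - 1) with hudef
  have hu : a ^ (2^k) = u * a := by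
    rw [hudef, ← pow_succ]
    congr 1
    omega
  have hqq : a ^ (2^(2*k)) = u^(2^k) * (u * a) := by
    have h2 : (2:ℕ)^(2*k) = 2^k * 2^k := by rw [two_mul, pow_add]
    rw [h2, pow_mul, hu, mul_pow, hu]
  have p0 : a^((2:ℕ)^0) = a := by norm_num
  have p1 : a^((2:ℕ)^0+2^k) = a^((2:ℕ)^0) * a^(2^k) := pow_add a _ _
  have p2 : a^((2:ℕ)^0+2^(2*k)) = a^((2:ℕ)^0)*a^(2^(2*k)) := pow_add a _ _
  have p3 : a^((2:ℕ)^k+2^(2*k)) = a^(2^k)*a^(2^(2*k)) := pow_add a _ _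
  rw [p0, hu, hqq] at e1
  rw [p1, p2, p3, p0, hu, hqq] at e2
  have hune : u ≠ 0 := pow_ne_zero _ ha
  have h1 : 1 + u + u^(2^k) * u = 0 := by
    have hmul : a * (1 + u + u^(2^k) * u) = 0 := by linear_combination e1
    rcases mul_eq_zero.mp hmul with h' | h'
    · exact absurd h' ha
    · exact h'
  have h2 : 1 + u^(2^k) + u^(2^k) * u = 0 := by
    have hmul : (a * a * u) * (1 + u^(2^k) + u^(2^k) * u) = 0 := by linear_combination e2
    rcases mul_eq_zero.mp hmul with h' | h'
    · rcases mul_eq_zero.mp h' with h'' | h''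
      · rcases mul_eq_zero.mp h'' with h3 | h3 <;> [exact absurd h3 ha; exact absurd h3 ha]
      · exact absurd h'' hune
    · exact h'
  linear_combination h2 - h1
end

section
/- Let k be an odd positive integer and let a be a nonzero element of F_{2^{3k}}. If a^{2^k - 1} lies in the subfield F_{2^k}, then a itself lies in F_{2^k}. -/
/-- For odd `k > 0` and nonzero `a ∈ F_{2^{3k}}`: if `a^(2^k - 1)` lies in the subfield
`F_{2^k} = {x : x^(2^k) = x}`, then `a` itself lies in `F_{2^k}`. -/
theorem stmt6 {F : Type*} [Field F] [Fintype F] (k : ℕ)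
    (hodd : Odd k) (hk : 0 < k) (hcard : Fintype.card F = 2 ^ (3 * k))
    (a : F) (ha : a ≠ 0)
    (h : (a ^ (2 ^ k - 1)) ^ (2 ^ k) = a ^ (2 ^ k - 1)) :
    a ^ (2 ^ k) = a := by
  set q := 2 ^ k with hq
  have hq2 : 2 ≤ q := by
    calc 2 = 2 ^ 1 := (pow_one 2).symm
    _ ≤ 2 ^ k := Nat.pow_le_pow_right (by norm_num) hk
  -- a^((q-1)^2) = 1
  have hb : a ^ (q - 1) ≠ 0 := pow_ne_zero _ ha
  have h1 : a ^ ((q - 1) * (q - 1)) = 1 := by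
    have := h
    rw [show q = (q - 1) + 1 by omega, pow_succ] at this
    have h2 : (a ^ (q - 1)) ^ (q - 1) = 1 := by
      field_simp at this
      exact this
    rwa [← pow_mul] at h2
  -- a^(q^3 - 1) = 1
  have h3 : a ^ (q ^ 3 - 1) = 1 := by
    have := FiniteField.pow_card_sub_one_eq_one a ha
    rwa [hcard, show 2 ^ (3 * k) = q ^ 3 by rw [hq, ← pow_mul, Nat.mul_comm]] at this
  -- order considerations
  have hd1 : orderOf a ∣ (q - 1) * (q - 1) := orderOf_dvd_of_pow_eq_one h1
  have hd2 : orderOf a ∣ q ^ 3 - 1 := orderOf_dvd_of_pow_eq_one h3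
  have hfact : q ^ 3 - 1 = (q - 1) * (q * q + q + 1) := by
    have : q ^ 3 = q * q * q := by ring
    rw [this]
    obtain ⟨m, hm⟩ := Nat.exists_eq_add_of_le hq2
    rw [hm, show 2 + m - 1 = m + 1 by omega]
    exact Nat.sub_eq_of_eq_add (by ring)
  -- coprimality: gcd(q-1, 3) = 1 since q ≡ 2 mod 3
  have hcop3 : Nat.Coprime (q - 1) 3 := by
    obtain ⟨m, hm⟩ := hodd
    have hqmod : q % 3 = 2 := by
      rw [hq, hm, pow_add, pow_mul, pow_one]
      have h4 : (2 ^ 2) ^ m % 3 = 1 := by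
        have : (2:ℕ) ^ 2 % 3 = 1 := by norm_num
        rw [Nat.pow_mod, this, one_pow]; norm_num
      omega
    have : (q - 1) % 3 = 1 := by omega
    have h3p : Nat.Prime 3 := by norm_num
    rw [Nat.coprime_comm]
    rw [Nat.Prime.coprime_iff_not_dvd h3p]
    omega
  have hcop : Nat.Coprime (q - 1) (q * q + q + 1) := by
    have hid : q * q + q + 1 = 3 + (q - 1) * (q + 2) := by
      obtain ⟨m, hm⟩ := Nat.exists_eq_add_of_le hq2
      rw [hm, show 2 + m - 1 = m + 1 by omega]; ring
    rw [hid]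
    exact (Nat.coprime_add_mul_left_right _ 3 _).mpr hcop3
  -- orderOf a ∣ q - 1
  have hdvd : orderOf a ∣ q - 1 := by
    have hg : orderOf a ∣ Nat.gcd ((q - 1) * (q - 1)) ((q - 1) * (q * q + q + 1)) := by
      apply Nat.dvd_gcd hd1
      rwa [← hfact]
    rwa [Nat.gcd_mul_left, Nat.Coprime.gcd_eq_one hcop, mul_one] at hg
  have hfin : a ^ (q - 1) = 1 := orderOf_dvd_iff_pow_eq_one.mp hdvd
  calc a ^ q = a ^ (q - 1) * a := by rw [← pow_succ]; congr 1; omega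
  _ = a := by rw [hfin, one_mul]
end

section
/- Let k ≥ 2 be an integer, set m = 3k, and let a be a nonzero element of F_{2^m}. If the subtrace S_{2^m}(a z) = 0 for every z ∈ F_{2^k}, then Σ_{1 ≤ i < j ≤ 3} a^{2^{ik-1} + 2^{jk-1}} = 0, i.e. a^{2^{k-1} + 2^{2k-1}} + a^{2^{k-1} + 2^{3k-1}} + a^{2^{2k-1} + 2^{3k-1}} = 0. -/
open Finset Polynomial in
/-- For `k ≥ 2`, `m = 3k` and nonzero `a ∈ F_{2^m}`: if `S_{2^m}(a z) = 0` for every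
`z` in the subfield `F_{2^k} = {z : z^(2^k) = z}`, then
`a^(2^(k-1) + 2^(2k-1)) + a^(2^(k-1) + 2^(3k-1)) + a^(2^(2k-1) + 2^(3k-1)) = 0`. -/
theorem stmt8 {F : Type*} [Field F] [Fintype F] (k m : ℕ)
    (hk : 2 ≤ k) (hm : m = 3 * k) (hcard : Fintype.card F = 2 ^ m)
    (a : F) (ha : a ≠ 0)
    (h : ∀ z : F, z ^ (2 ^ k) = z → subTrace m (a * z) = 0) :
    a ^ (2 ^ (k - 1) + 2 ^ (2 * k - 1)) + a ^ (2 ^ (k - 1) + 2 ^ (3 * k - 1))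
      + a ^ (2 ^ (2 * k - 1) + 2 ^ (3 * k - 1)) = 0 := by
  classical
  have hk1 : 1 ≤ k := by omega
  -- reduction of Frobenius exponents on the subfield
  have key : ∀ z : F, z ^ (2^k) = z → ∀ i : ℕ, z ^ (2^i) = z ^ (2^(i % k)) := by
    intro z hz i
    induction i using Nat.strong_induction_on with
    | _ i ih =>
      rcases lt_or_ge i k with hik | hik
      · rw [Nat.mod_eq_of_lt hik]
      · have h1 : i = k + (i - k) := by omega
        have h2 : z ^ (2^(k + (i-k))) = z ^ (2^(i-k)) := by
          rw [pow_add, pow_mul, hz]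
        rw [Nat.mod_eq_sub_mod hik, ← ih (i - k) (by omega)]
        conv_lhs => rw [h1]
        exact h2
  set E : ℕ → ℕ → ℕ := fun i j =>
    if i % k = k-1 ∧ j % k = k-1 then 1 else 2^(i % k) + 2^(j % k) with hE
  set P : Polynomial F :=
    ∑ i ∈ range m, ∑ j ∈ Ico (i+1) m, C (a^(2^i+2^j)) * X ^ (E i j) with hP
  -- P evaluates to subTrace m (a*z) on the subfield
  have heval : ∀ z : F, z ^ (2^k) = z → P.eval z = 0 := by
    intro z hz
    have : P.eval z = subTrace m (a * z) := by
      rw [hP, subTrace]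
      simp only [eval_finset_sum, eval_mul, eval_C, eval_pow, eval_X]
      refine Finset.sum_congr rfl fun i _ => Finset.sum_congr rfl fun j _ => ?_
      have hzi : z ^ (E i j) = z ^ (2^i) * z ^ (2^j) := by
        rw [key z hz i, key z hz j, ← pow_add]
        simp only [hE]
        by_cases hc : i % k = k-1 ∧ j % k = k-1
        · rw [if_pos hc, hc.1, hc.2]
          have h2k : 2^(k-1) + 2^(k-1) = 2^k := by
            rw [← two_mul, ← pow_succ']
            congr 1
            omega
          rw [h2k, hz, pow_one]
        · rw [if_neg hc]
      rw [hzi, mul_pow, pow_add a, pow_add z]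
    rw [this]
    exact h z hz
  -- degree bound
  have hdeg : P.natDegree < 2^k := by
    have hle : P.natDegree ≤ 2^(k-1) + 2^(k-2) := by
      rw [hP]
      refine natDegree_sum_le_of_forall_le _ _ fun i _ => ?_
      refine natDegree_sum_le_of_forall_le _ _ fun j _ => ?_
      refine (natDegree_C_mul_X_pow_le _ _).trans ?_
      simp only [hE]
      by_cases hc : i % k = k-1 ∧ j % k = k-1
      · rw [if_pos hc]
        exact le_trans Nat.one_le_two_pow (Nat.le_add_right _ _)
      · rw [if_neg hc]
        have hik : i % k ≤ k - 1 := by have := Nat.mod_lt i (show 0 < k by omega); omega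
        have hjk : j % k ≤ k - 1 := by have := Nat.mod_lt j (show 0 < k by omega); omega
        rcases not_and_or.mp hc with hc' | hc'
        · have : i % k ≤ k - 2 := by omega
          calc 2^(i % k) + 2^(j % k) ≤ 2^(k-2) + 2^(k-1) :=
                Nat.add_le_add (Nat.pow_le_pow_right (by norm_num) this)
                  (Nat.pow_le_pow_right (by norm_num) hjk)
            _ = 2^(k-1) + 2^(k-2) := by ring
        · have : j % k ≤ k - 2 := by omega
          exact Nat.add_le_add (Nat.pow_le_pow_right (by norm_num) hik)
            (Nat.pow_le_pow_right (by norm_num) this)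
    have hlt : 2^(k-1) + 2^(k-2) < 2^k := by
      have e1 : k - 1 = (k-2)+1 := by omega
      have e2 : k = (k-2)+2 := by omega
      have hx : 1 ≤ 2^(k-2) := Nat.one_le_two_pow
      calc 2^(k-1)+2^(k-2) = 2^((k-2)+1) + 2^(k-2) := by rw [e1]
        _ < 2^((k-2)+2) := by rw [pow_succ, pow_succ, pow_succ]; nlinarith
        _ = 2^k := by rw [← e2]
    omega
  -- there are at least 2^k points z with z^(2^k) = z
  obtain ⟨g, hg⟩ := IsCyclic.exists_ofOrder_eq_natCard (α := Fˣ)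
  have hcardu : Nat.card Fˣ = 2^m - 1 := by
    rw [Nat.card_eq_fintype_card, Fintype.card_units, hcard]
  set n : ℕ := 2^m - 1 with hn
  set d : ℕ := 2^k - 1 with hd
  have hdn : d ∣ n := by
    have h3 : (2^k)^3 = 2^m := by rw [← pow_mul, hm, mul_comm]
    have hdvd := Nat.sub_dvd_pow_sub_pow (2^k) 1 3
    rw [h3, one_pow] at hdvd
    rw [hn, hd]
    exact hdvd
  have hn0 : 0 < n := by
    have : (4:ℕ) ≤ 2^m := by
      calc (4:ℕ) = 2^2 := by norm_num
        _ ≤ 2^m := Nat.pow_le_pow_right (by norm_num) (by omega)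
    omega
  have hd0 : 0 < d := by
    have : (4:ℕ) ≤ 2^k := by
      calc (4:ℕ) = 2^2 := by norm_num
        _ ≤ 2^k := Nat.pow_le_pow_right (by norm_num) hk
    omega
  set u : Fˣ := g ^ (n / d) with hu
  have hordu : orderOf u = d := by
    have hnd0 : n / d ≠ 0 := by
      have := Nat.div_pos (Nat.le_of_dvd hn0 hdn) hd0
      omega
    rw [hu, orderOf_pow_of_dvd hnd0 (by rw [hg, hcardu]; exact Nat.div_dvd_of_dvd hdn),
      hg, hcardu]
    exact Nat.div_div_self hdn (by omega)
  have hupow : ∀ t : ℕ, ((u ^ t : Fˣ) : F) ^ (2^k) = ((u ^ t : Fˣ) : F) := by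
    intro t
    have h2k : 2^k = d + 1 := by omega
    have : (u ^ t) ^ (2^k) = u ^ t := by
      rw [h2k, ← pow_mul, mul_add, mul_one, pow_add, mul_comm t d, pow_mul, ← hordu,
        pow_orderOf_eq_one, one_pow, one_mul]
    calc ((u ^ t : Fˣ) : F) ^ (2^k) = (((u ^ t) ^ (2^k) : Fˣ) : F) := by push_cast; ring
      _ = ((u ^ t : Fˣ) : F) := by rw [this]
  -- the evaluation points
  set f : Option (Fin d) → F := fun o => o.elim 0 (fun t => ((u ^ (t:ℕ) : Fˣ) : F)) with hf
  have hfinj : Function.Injective f := by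
    intro o₁ o₂ hoo
    match o₁, o₂ with
    | none, none => rfl
    | none, some t => exact absurd hoo.symm (Units.ne_zero _)
    | some t, none => exact absurd hoo (Units.ne_zero _)
    | some t₁, some t₂ =>
      have : u ^ (t₁:ℕ) = u ^ (t₂:ℕ) := Units.ext hoo
      have := pow_injOn_Iio_orderOf (x := u)
        (by rw [hordu]; exact Set.mem_Iio.mpr t₁.isLt)
        (by rw [hordu]; exact Set.mem_Iio.mpr t₂.isLt) this
      exact congrArg some (Fin.ext this)
  have hP0 : P = 0 := by
    refine Polynomial.eq_zero_of_natDegree_lt_card_of_eval_eq_zero P hfinj (fun o => ?_) ?_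
    · match o with
      | none =>
        refine heval 0 ?_
        rw [zero_pow (by positivity)]
      | some t => exact heval _ (hupow t)
    · rw [Fintype.card_option, Fintype.card_fin]
      omega
  -- extract the coefficient of X^1
  have hcoeff : P.coeff 1 = 0 := by rw [hP0, coeff_zero]
  rw [hP, finset_sum_coeff] at hcoeff
  simp only [finset_sum_coeff, coeff_C_mul, coeff_X_pow] at hcoeff
  -- characterize indices with i % k = k - 1
  have hmod : ∀ i, i < m → (i % k = k - 1 ↔ i = k-1 ∨ i = 2*k-1 ∨ i = 3*k-1) := by
    intro i him
    constructor
    · intro hi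
      have hdm := Nat.div_add_mod i k
      set q := i / k with hq
      have hq3 : q < 3 := by
        by_contra hq3
        push_neg at hq3
        have : 3 * k ≤ k * q := by
          calc 3 * k = k * 3 := by ring
            _ ≤ k * q := Nat.mul_le_mul_left k hq3
        omega
      interval_cases q <;> omega
    · rintro (rfl | rfl | rfl)
      · exact Nat.mod_eq_of_lt (by omega)
      · have : 2*k-1 = k + (k-1) := by omega
        rw [this, Nat.add_mod_left]
        exact Nat.mod_eq_of_lt (by omega)
      · have : 3*k-1 = k + (k + (k-1)) := by omega
        rw [this, Nat.add_mod_left, Nat.add_mod_left]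
        exact Nat.mod_eq_of_lt (by omega)
  -- rewrite the double sum
  have hsum : (∑ i ∈ range m, ∑ j ∈ Ico (i+1) m,
      a^(2^i+2^j) * (if (1:ℕ) = E i j then (1:F) else 0)) =
      a ^ (2 ^ (k - 1) + 2 ^ (2 * k - 1)) + a ^ (2 ^ (k - 1) + 2 ^ (3 * k - 1))
      + a ^ (2 ^ (2 * k - 1) + 2 ^ (3 * k - 1)) := by
    have hEone : ∀ i j, ((1:ℕ) = E i j) ↔ (i % k = k-1 ∧ j % k = k-1) := by
      intro i j
      rw [hE]
      by_cases hc : i % k = k-1 ∧ j % k = k-1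
      · simp [hc]
      · simp only [hc, if_false, iff_false]
        intro h1
        have : 1 ≤ 2^(i % k) := Nat.one_le_two_pow
        have : 1 ≤ 2^(j % k) := Nat.one_le_two_pow
        omega
    have hterm : ∀ i j, a^(2^i+2^j) * (if (1:ℕ) = E i j then (1:F) else 0) =
        if (i % k = k-1 ∧ j % k = k-1) then a^(2^i+2^j) else 0 := by
      intro i j
      by_cases hc : i % k = k-1 ∧ j % k = k-1
      · rw [if_pos ((hEone i j).mpr hc), if_pos hc, mul_one]
      · rw [if_neg (fun hh => hc ((hEone i j).mp hh)), if_neg hc, mul_zero]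
    simp only [hterm]
    -- outer filter
    rw [← Finset.sum_filter_of_ne (p := fun i => i % k = k - 1)
      (f := fun i => ∑ j ∈ Ico (i+1) m, if (i % k = k-1 ∧ j % k = k-1) then a^(2^i+2^j) else 0)
      (by
        intro i hi hne
        by_contra hik
        apply hne
        refine Finset.sum_eq_zero fun j _ => ?_
        rw [if_neg (fun hc => hik hc.1)])]
    have hfilter : (range m).filter (fun i => i % k = k - 1) = {k-1, 2*k-1, 3*k-1} := by
      ext x
      simp only [mem_filter, mem_range, mem_insert, mem_singleton]
      constructor
      · rintro ⟨hx, hxk⟩; exact (hmod x hx).mp hxk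
      · intro hx
        have hxm : x < m := by omega
        exact ⟨hxm, (hmod x hxm).mpr hx⟩
    rw [hfilter]
    have hne1 : (k-1:ℕ) ∉ ({2*k-1, 3*k-1} : Finset ℕ) := by
      simp only [mem_insert, mem_singleton]; omega
    have hne2 : (2*k-1:ℕ) ∉ ({3*k-1} : Finset ℕ) := by
      simp only [mem_singleton]; omega
    rw [Finset.sum_insert hne1, Finset.sum_insert hne2, Finset.sum_singleton]
    -- inner sums
    have hinner : ∀ i, i < m → i % k = k - 1 →
        (∑ j ∈ Ico (i+1) m, if (i % k = k-1 ∧ j % k = k-1) then a^(2^i+2^j) else 0) =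
        ∑ j ∈ (Ico (i+1) m).filter (fun j => j % k = k-1), a^(2^i+2^j) := by
      intro i him hik
      rw [Finset.sum_filter]
      refine Finset.sum_congr rfl fun j _ => ?_
      by_cases hc : j % k = k - 1
      · rw [if_pos ⟨hik, hc⟩, if_pos hc]
      · rw [if_neg (fun hh => hc hh.2), if_neg hc]
    have hm1 : (k-1:ℕ) % k = k - 1 := Nat.mod_eq_of_lt (by omega)
    have hm2 : (2*k-1:ℕ) % k = k - 1 := (hmod _ (by omega)).mpr (by omega)
    have hm3 : (3*k-1:ℕ) % k = k - 1 := (hmod _ (by omega)).mpr (by omega)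
    rw [hinner (k-1) (by omega) hm1, hinner (2*k-1) (by omega) hm2,
      hinner (3*k-1) (by omega) hm3]
    have hf1 : (Ico (k-1+1) m).filter (fun j => j % k = k-1) = {2*k-1, 3*k-1} := by
      ext x
      simp only [mem_filter, mem_Ico, mem_insert, mem_singleton]
      constructor
      · rintro ⟨⟨hx1, hx2⟩, hx3⟩
        have := (hmod x hx2).mp hx3
        omega
      · intro hx
        refine ⟨⟨by omega, by omega⟩, (hmod x (by omega)).mpr (by omega)⟩
    have hf2 : (Ico (2*k-1+1) m).filter (fun j => j % k = k-1) = {3*k-1} := by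
      ext x
      simp only [mem_filter, mem_Ico, mem_singleton]
      constructor
      · rintro ⟨⟨hx1, hx2⟩, hx3⟩
        have := (hmod x hx2).mp hx3
        omega
      · intro hx
        refine ⟨⟨by omega, by omega⟩, (hmod x (by omega)).mpr (by omega)⟩
    have hf3 : (Ico (3*k-1+1) m).filter (fun j => j % k = k-1) = ∅ := by
      apply Finset.filter_eq_empty_iff.mpr
      intro x hx
      simp only [mem_Ico] at hx
      omega
    rw [hf1, hf2, hf3]
    rw [Finset.sum_insert (by simp only [mem_singleton]; omega),
      Finset.sum_singleton, Finset.sum_singleton, Finset.sum_empty, add_zero]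
  rw [hsum] at hcoeff
  exact hcoeff
end

section
/- Let k be a positive integer and let a be a nonzero element of F_{2^{3k}}. If a + a^{2^k} + a^{2^{2k}} = 0 and a^{2^k + 1} + a^{2^{2k} + 1} + a^{2^{2k} + 2^k} = 0, then a^{2^k - 1} is a nonzero element of the subfield F_{2^k}. -/
lemma aux_two_pow_mod (m : ℕ) : 2 ^ m % 3 = if Even m then 1 else 2 := by
  induction m with
  | zero => simp
  | succ n ih =>
    rw [pow_succ, Nat.mul_mod, ih]
    by_cases h : Even n <;> simp [h, Nat.even_add_one]

lemma aux_two_pow_mod_three (m : ℕ) : 3 ∣ 2 ^ m - 1 ↔ Even m := by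
  have h1 : (1:ℕ) ≤ 2 ^ m := Nat.one_le_two_pow
  have hmod := aux_two_pow_mod m
  constructor
  · intro h; by_contra he; rw [if_neg he] at hmod; omega
  · intro he; rw [if_pos he] at hmod; omega

/-- For `k > 0` and nonzero `a ∈ F_{2^{3k}}`: if `a + a^(2^k) + a^(2^(2k)) = 0` and
`a^(2^k+1) + a^(2^(2k)+1) + a^(2^(2k)+2^k) = 0`, then `a^(2^k - 1)` is a nonzero element
of the subfield `F_{2^k} = {x : x^(2^k) = x}`. -/
theorem stmt11 {F : Type*} [Field F] [Fintype F] (k : ℕ)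
    (hk : 0 < k) (hcard : Fintype.card F = 2 ^ (3 * k))
    (a : F) (ha : a ≠ 0)
    (hC : a + a ^ (2 ^ k) + a ^ (2 ^ (2 * k)) = 0)
    (hG : a ^ (2 ^ k + 1) + a ^ (2 ^ (2 * k) + 1) + a ^ (2 ^ (2 * k) + 2 ^ k) = 0) :
    (a ^ (2 ^ k - 1)) ^ (2 ^ k) = a ^ (2 ^ k - 1) ∧ a ^ (2 ^ k - 1) ≠ 0 := by
  -- characteristic 2
  have hchar : CharP F 2 := by
    obtain ⟨p, hp⟩ := CharP.exists F
    obtain ⟨n, hprime, hcard'⟩ := FiniteField.card F p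
    have hp2 : p = 2 := by
      have hdvd : p ∣ 2 ^ (3 * k) := by
        rw [← hcard, hcard']; exact dvd_pow_self p n.pos.ne'
      have := (Nat.Prime.dvd_of_dvd_pow hprime hdvd)
      exact (Nat.prime_dvd_prime_iff_eq hprime Nat.prime_two).mp this
    rwa [hp2] at hp
  haveI := hchar
  have two : (2:F) = 0 := by
    have := CharP.cast_eq_zero F 2; exact_mod_cast this
  set b := a ^ (2 ^ k) with hb
  set c := a ^ (2 ^ (2 * k)) with hc
  have hcab : c = a + b := by linear_combination hC - (a + b) * two
  -- rewrite hG
  have hG' : a ^ 2 + a * b + b ^ 2 = 0 := by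
    have e1 : a ^ (2 ^ k + 1) = b * a := by rw [pow_add, pow_one, hb]
    have e2 : a ^ (2 ^ (2*k) + 1) = c * a := by rw [pow_add, pow_one, hc]
    have e3 : a ^ (2 ^ (2*k) + 2^k) = c * b := by rw [pow_add, hc, hb]
    rw [e1, e2, e3, hcab] at hG
    linear_combination hG - (a * b) * two
  have cube : a ^ 3 = b ^ 3 := by
    linear_combination (a + b) * hG' - (b^3 + a^2*b + a*b^2) * two
  set t := a ^ (2 ^ k - 1) with ht
  have hq1 : 1 ≤ 2 ^ k := Nat.one_le_two_pow
  have htne : t ≠ 0 := pow_ne_zero _ ha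
  have ht3 : t ^ 3 = 1 := by
    have hb3 : b ^ 3 = a ^ (2 ^ k * 3) := by rw [hb, ← pow_mul]
    have key : a ^ 3 * t ^ 3 = a ^ 3 * 1 := by
      rw [mul_one, ht, ← pow_mul, ← pow_add, cube, hb3]
      congr 1
      omega
    exact mul_left_cancel₀ (pow_ne_zero 3 ha) key
  have hord : orderOf t ∣ 3 := orderOf_dvd_of_pow_eq_one ht3
  have htq : t ^ (2 ^ k - 1) = 1 := by
    rcases (Nat.Prime.eq_one_or_self_of_dvd Nat.prime_three _ hord) with h1 | h3
    · have : t = 1 := orderOf_eq_one_iff.mp h1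
      rw [this, one_pow]
    · have hcardpow : t ^ (Fintype.card F - 1) = 1 :=
        FiniteField.pow_card_sub_one_eq_one t htne
      have h3dvd := orderOf_dvd_of_pow_eq_one hcardpow
      rw [h3, hcard] at h3dvd
      have hkeven : Even k := by
        have := (aux_two_pow_mod_three (3 * k)).mp h3dvd
        rcases Nat.even_mul.mp this with h | h
        · exact absurd h (by decide)
        · exact h
      obtain ⟨m, hm⟩ := (aux_two_pow_mod_three k).mpr hkeven
      rw [hm, pow_mul, ht3, one_pow]
  constructor
  · calc t ^ (2 ^ k) = t ^ (2 ^ k - 1) * t := by rw [← pow_succ]; congr 1; omega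
    _ = t := by rw [htq, one_mul]
  · exact htne
end
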